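/- arXiv:1102.0937 — 4 statements merged into one kernel-verified Lean document; each statement's English description precedes it below -/
import Mathlib

section
/- Let β > 0 and define f : ℝ → ℝ by f(y) = (1 − y)/((1 − y)² + β·y). Then for every integer m ≥ 1 there exists a constant C > 0 such that |y^{m+1} · f^{(m)}(y)| ≤ C for all y ≥ 0, where f^{(m)} denotes the m-th derivative of f. -/
/-!
Every derivative of a rational function `P / D` has the form `R / D ^ (k + 1)`, where each
differentiation raises the degree of the numerator by at most `deg D - 1`. Here `deg D = 2`,
so the numerator of `f⁽ᵐ⁾` has degree at most `m + 1` and `y ^ (m + 1) * f⁽ᵐ⁾ y` is a rational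
function whose numerator has degree at most the degree `2 (m + 1)` of its denominator. The latter
is positive on `[0, ∞)`, even bounded below by a multiple of `(1 + y) ^ (2 (m + 1))`, which
bounds the quotient.
-/

open Polynomial

namespace Polynomial

theorem exists_abs_eval_le_mul_one_add_pow (P : ℝ[X]) {n : ℕ} (hP : P.natDegree ≤ n) :
    ∃ M : ℝ, ∀ y : ℝ, 0 ≤ y → |P.eval y| ≤ M * (1 + y) ^ n := by
  refine ⟨∑ i ∈ Finset.range (n + 1), |P.coeff i|, fun y hy => ?_⟩
  rw [P.eval_eq_sum_range' (Nat.lt_succ_of_le hP), Finset.sum_mul]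
  refine (Finset.abs_sum_le_sum_abs _ _).trans (Finset.sum_le_sum fun i hi => ?_)
  rw [abs_mul, abs_pow, abs_of_nonneg hy]
  gcongr
  calc y ^ i ≤ (1 + y) ^ i := pow_le_pow_left₀ hy (by linarith) i
    _ ≤ (1 + y) ^ n :=
      pow_le_pow_right₀ (by linarith) (Nat.lt_succ_iff.mp (Finset.mem_range.mp hi))

theorem hasDerivAt_eval_div_eval_pow (R D : ℝ[X]) (k : ℕ) {y : ℝ} (hy : D.eval y ≠ 0) :
    HasDerivAt (fun z => R.eval z / D.eval z ^ (k + 1))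
      ((derivative R * D - C ((k : ℝ) + 1) * (R * derivative D)).eval y / D.eval y ^ (k + 2))
      y := by
  have hpow := (D.hasDerivAt y).fun_pow (k + 1)
  refine ((R.hasDerivAt y).fun_div hpow (pow_ne_zero _ hy)).congr_deriv ?_
  simp only [eval_sub, eval_mul, eval_C, Nat.add_sub_cancel, Nat.cast_add, Nat.cast_one]
  field_simp
  ring

/-- The numerator of the `k`-th derivative of `P / D` written over `D ^ (k + 1)`. -/
noncomputable def iteratedDerivNum (P D : ℝ[X]) : ℕ → ℝ[X]
  | 0 => P
  | k + 1 => derivative (iteratedDerivNum P D k) * D -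
      C ((k : ℝ) + 1) * (iteratedDerivNum P D k * derivative D)

theorem natDegree_iteratedDerivNum_le {P D : ℝ[X]} {p q : ℕ} (hP : P.natDegree ≤ p)
    (hD : D.natDegree ≤ q + 1) (k : ℕ) : (iteratedDerivNum P D k).natDegree ≤ p + k * q := by
  induction k with
  | zero => simpa [iteratedDerivNum] using hP
  | succ k ih =>
    set R := iteratedDerivNum P D k
    have hR' : (derivative R).natDegree ≤ p + k * q - 1 :=
      (natDegree_derivative_le R).trans (Nat.sub_le_sub_right ih 1)
    have hD' : (derivative D).natDegree ≤ q :=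
      (natDegree_derivative_le D).trans (Nat.sub_le_of_le_add hD)
    have h₁ : (derivative R * D).natDegree ≤ p + (k + 1) * q := by
      rcases Nat.eq_zero_or_pos (p + k * q) with h₀ | h₀
      · rw [derivative_of_natDegree_zero (by omega), zero_mul, natDegree_zero]
        exact Nat.zero_le _
      · exact natDegree_mul_le.trans (by rw [add_mul]; omega)
    have h₂ : (C ((k : ℝ) + 1) * (R * derivative D)).natDegree ≤ p + (k + 1) * q :=
      (natDegree_C_mul_le _ _).trans (natDegree_mul_le.trans (by rw [add_mul]; omega))
    exact (natDegree_sub_le _ _).trans (max_le h₁ h₂)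

theorem iteratedDeriv_eval_div_eval (P D : ℝ[X]) (k : ℕ) {y : ℝ} (hy : D.eval y ≠ 0) :
    iteratedDeriv k (fun z => P.eval z / D.eval z) y =
      (iteratedDerivNum P D k).eval y / D.eval y ^ (k + 1) := by
  induction k generalizing y with
  | zero => simp [iteratedDerivNum]
  | succ k ih =>
    have hnear : iteratedDeriv k (fun z => P.eval z / D.eval z) =ᶠ[nhds y]
        fun z => (iteratedDerivNum P D k).eval z / D.eval z ^ (k + 1) := by
      filter_upwards [D.continuous.continuousAt.eventually_ne hy] with z hz using ih hz
    rw [iteratedDeriv_succ, hnear.deriv_eq,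
      (hasDerivAt_eval_div_eval_pow _ D k hy).deriv, iteratedDerivNum]

theorem exists_abs_eval_div_pow_le (Q : ℝ[X]) {n : ℕ} (hQ : Q.natDegree ≤ 2 * n)
    {D : ℝ → ℝ} {c : ℝ} (hc : 0 < c) (hD : ∀ y : ℝ, 0 ≤ y → c * (1 + y) ^ 2 ≤ D y) :
    ∃ M : ℝ, 0 < M ∧ ∀ y : ℝ, 0 ≤ y → |Q.eval y / D y ^ n| ≤ M := by
  obtain ⟨M, hM⟩ := Q.exists_abs_eval_le_mul_one_add_pow hQ
  refine ⟨max (M / c ^ n) 1, by positivity, fun y hy => le_max_of_le_left ?_⟩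
  have hpos : 0 < c * (1 + y) ^ 2 := by positivity
  calc |Q.eval y / D y ^ n|
      = |Q.eval y| / D y ^ n := by
        rw [abs_div, abs_of_pos (pow_pos (hpos.trans_le (hD y hy)) n)]
    _ ≤ |Q.eval y| / (c * (1 + y) ^ 2) ^ n := by
        gcongr
        exact hD y hy
    _ ≤ M * (1 + y) ^ (2 * n) / (c * (1 + y) ^ 2) ^ n := by
        gcongr
        exact hM y hy
    _ = M / c ^ n := by
        rw [mul_pow, ← pow_mul, mul_div_mul_right _ _ (by positivity)]

end Polynomial

theorem le_sub_sq_add_mul (β : ℝ) {y : ℝ} (hy : 0 ≤ y) :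
    min 1 (β / 4) * (1 + y) ^ 2 ≤ (1 - y) ^ 2 + β * y := by
  have h₁ : min 1 (β / 4) ≤ 1 := min_le_left _ _
  have h₂ : min 1 (β / 4) ≤ β / 4 := min_le_right _ _
  -- `(1 + y) ^ 2 = (1 - y) ^ 2 + 4 * y`
  nlinarith [mul_nonneg (sub_nonneg.2 h₁) (sq_nonneg (1 - y)),
    mul_nonneg (by linarith : 0 ≤ β - 4 * min 1 (β / 4)) hy]

theorem stmt_3 (β : ℝ) (hβ : 0 < β) (f : ℝ → ℝ)
    (hf : ∀ y, f y = (1 - y) / ((1 - y)^2 + β * y)) :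
    ∀ m : ℕ, 1 ≤ m → ∃ C : ℝ, 0 < C ∧
      ∀ y : ℝ, 0 ≤ y → |y^(m+1) * iteratedDeriv m f y| ≤ C := by
  intro m _
  set D : ℝ[X] := X ^ 2 + C (β - 2) * X + 1
  have hD : ∀ y, D.eval y = (1 - y) ^ 2 + β * y := fun y => by
    simp only [D, eval_add, eval_pow, eval_X, eval_mul, eval_C, eval_one]; ring
  have hf' : f = fun y => (1 - X : ℝ[X]).eval y / D.eval y := funext fun y => by simp [hf, hD]
  have hnum : (iteratedDerivNum (1 - X) D m).natDegree ≤ 1 + m * 1 :=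
    natDegree_iteratedDerivNum_le (by compute_degree!) (by simp only [D]; compute_degree!) m
  have hdeg : (X ^ (m + 1) * iteratedDerivNum (1 - X) D m).natDegree ≤ 2 * (m + 1) :=
    natDegree_mul_le.trans (by rw [natDegree_X_pow]; omega)
  obtain ⟨M, hM, hbound⟩ := exists_abs_eval_div_pow_le _ hdeg (D := D.eval)
    (lt_min one_pos (by positivity)) fun y hy => (hD y).symm ▸ le_sub_sq_add_mul β hy
  refine ⟨M, hM, fun y hy => ?_⟩
  have hDy : D.eval y ≠ 0 := hD y ▸
    ((by positivity : 0 < min 1 (β / 4) * (1 + y) ^ 2).trans_le (le_sub_sq_add_mul β hy)).ne'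
  rw [hf', iteratedDeriv_eval_div_eval _ _ _ hDy, ← mul_div_assoc]
  simpa using hbound y hy
end

section
/- Let β > 0 and define f : ℝ → ℝ by f(y) = (1 − y)/((1 − y)² + β·y). Then the map s ↦ s·f(s²) is globally Lipschitz on ℝ: there exists a constant C > 0 such that |s·f(s²) − t·f(t²)| ≤ C·|s − t| for all s, t ∈ ℝ. -/
/-!
Write `u = s²` and `D(u) = (1 - u)² + β u`. The derivative of `s ↦ s f(s²) = (s - s³) / D(s²)` is
`(1 + u) ((1 - u)² - β u) / D(u)²`. As `|(1 - u)² - β u| ≤ D(u)`, it is bounded by `(1 + u) / D(u)`,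
and `1 + u ≤ (1 + 2/β) D(u)` for `u ≥ 0`, so the mean value theorem gives the Lipschitz constant
`1 + 2/β`.
-/

noncomputable def siegertDenom (β y : ℝ) : ℝ := (1 - y) ^ 2 + β * y

noncomputable def siegertF (β y : ℝ) : ℝ := (1 - y) / siegertDenom β y

section

variable {β : ℝ}

lemma siegertDenom_pos (hβ : 0 < β) {y : ℝ} (hy : 0 ≤ y) : 0 < siegertDenom β y := by
  unfold siegertDenom
  rcases hy.eq_or_lt with rfl | hy
  · norm_num
  · nlinarith [sq_nonneg (1 - y), mul_pos hβ hy]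

lemma abs_sub_le_siegertDenom (hβ : 0 < β) {y : ℝ} (hy : 0 ≤ y) :
    |(1 - y) ^ 2 - β * y| ≤ siegertDenom β y := by
  have : 0 ≤ β * y := mul_nonneg hβ.le hy
  rw [abs_le, siegertDenom]
  constructor <;> nlinarith [sq_nonneg (1 - y)]

lemma one_add_le_mul_siegertDenom (hβ : 0 < β) {y : ℝ} (hy : 0 ≤ y) :
    1 + y ≤ (1 + 2 / β) * siegertDenom β y := by
  have key : 0 ≤ β * y * (y - 1 + β) + 2 * (1 - y) ^ 2 := by
    rcases le_total y 1 with hy1 | hy1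
    · -- discriminant in `β` is `y (1 - y)² (y - 8) ≤ 0`
      have hsos : β * y * (y - 1 + β) + 2 * (1 - y) ^ 2 =
          y * (β - (1 - y) / 2) ^ 2 + (1 - y) ^ 2 * (2 - y / 4) := by ring
      have : 0 ≤ 2 - y / 4 := by linarith
      rw [hsos]
      positivity
    · have : 0 ≤ y - 1 + β := by linarith
      positivity
  have hdiff : (1 + 2 / β) * siegertDenom β y - (1 + y) =
      (β * y * (y - 1 + β) + 2 * (1 - y) ^ 2) / β := by
    unfold siegertDenom
    field_simp
    ring
  rw [← sub_nonneg, hdiff]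
  positivity

lemma hasDerivAt_siegertDenom (y : ℝ) :
    HasDerivAt (siegertDenom β) (-2 * (1 - y) + β) y := by
  have h : HasDerivAt (fun x => (1 - x) ^ 2 + β * x) (2 * (1 - y) * (-1) + β) y := by
    simpa using (((hasDerivAt_id' y).const_sub 1).fun_pow 2).fun_add
      ((hasDerivAt_id' y).const_mul β)
  exact h.congr_deriv (by ring)

lemma hasDerivAt_siegertF {y : ℝ} (hy : siegertDenom β y ≠ 0) :
    HasDerivAt (siegertF β) (((1 - y) ^ 2 - β) / siegertDenom β y ^ 2) y := by
  have h := ((hasDerivAt_id' y).const_sub 1).fun_div (hasDerivAt_siegertDenom y) hy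
  refine h.congr_deriv ?_
  simp only [siegertDenom]
  ring

lemma hasDerivAt_mul_siegertF_sq (hβ : 0 < β) (s : ℝ) :
    HasDerivAt (fun x => x * siegertF β (x ^ 2))
      ((1 + s ^ 2) * ((1 - s ^ 2) ^ 2 - β * s ^ 2) / siegertDenom β (s ^ 2) ^ 2) s := by
  have hD := (siegertDenom_pos hβ (sq_nonneg s)).ne'
  have h := (hasDerivAt_id' s).fun_mul
    ((hasDerivAt_siegertF hD).comp (h := fun x => x ^ 2) s (hasDerivAt_pow 2 s))
  refine h.congr_deriv ?_
  simp only [Function.comp_apply, siegertF]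
  field_simp
  simp only [siegertDenom]
  ring

lemma abs_deriv_mul_siegertF_sq_le (hβ : 0 < β) {u : ℝ} (hu : 0 ≤ u) :
    |(1 + u) * ((1 - u) ^ 2 - β * u) / siegertDenom β u ^ 2| ≤ 1 + 2 / β := by
  have hD := siegertDenom_pos hβ hu
  rw [abs_div, abs_mul, abs_of_nonneg (by linarith : (0 : ℝ) ≤ 1 + u),
    abs_of_pos (by positivity : 0 < siegertDenom β u ^ 2), div_le_iff₀ (by positivity)]
  calc (1 + u) * |(1 - u) ^ 2 - β * u|
      ≤ (1 + u) * siegertDenom β u := by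
        gcongr
        exact abs_sub_le_siegertDenom hβ hu
    _ ≤ ((1 + 2 / β) * siegertDenom β u) * siegertDenom β u := by
        gcongr
        exact one_add_le_mul_siegertDenom hβ hu
    _ = (1 + 2 / β) * siegertDenom β u ^ 2 := by ring

end

theorem stmt_10 (β : ℝ) (hβ : 0 < β) (f : ℝ → ℝ)
    (hf : ∀ y, f y = (1 - y) / ((1 - y)^2 + β * y)) :
    ∃ C : ℝ, 0 < C ∧ ∀ s t : ℝ, |s * f (s^2) - t * f (t^2)| ≤ C * |s - t| := by
  obtain rfl : f = siegertF β := funext hf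
  refine ⟨1 + 2 / β, by positivity, fun s t => ?_⟩
  exact convex_univ.norm_image_sub_le_of_norm_hasDerivWithin_le
    (fun x _ => (hasDerivAt_mul_siegertF_sq hβ x).hasDerivWithinAt)
    (fun x _ => abs_deriv_mul_siegertF_sq_le hβ (sq_nonneg x)) (Set.mem_univ t) (Set.mem_univ s)
end

section
/- Let α ∈ ℝ, β > 0, f(y) = (1 − y)/((1 − y)² + β·y), and define the surface diffusion current J : ℝ² → ℝ² by J(p, q) = (j₁, j₂) with j₁ = α·((p+q)·f((p+q)²) + (p−q)·f((p−q)²)) and j₂ = α·((p+q)·f((p+q)²) − (p−q)·f((p−q)²)). Then J is bounded: there exists a constant C > 0 such that ‖J(p, q)‖ ≤ C for all (p, q) ∈ ℝ². -/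
/-!
By AM-GM, `2√β |x (1 - x²)| ≤ (1 - x²)² + β x²`, so the profile `x ↦ x f(x²)` is bounded by
`1 / (2√β)`. Both components of `J(p, q)` are `α (u ± v)` with `u`, `v` values of that profile,
hence `‖J(p, q)‖² = 2α²(u² + v²) ≤ α² / β`.
-/

open Real

lemma two_mul_sqrt_mul_abs_mul_le {β : ℝ} (hβ : 0 ≤ β) (a b : ℝ) :
    2 * √β * |a * b| ≤ b ^ 2 + β * a ^ 2 := by
  have h := two_mul_le_add_sq (√β * |a|) |b|
  rw [mul_pow, sq_sqrt hβ, sq_abs, sq_abs] at h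
  rw [abs_mul]
  linarith

lemma abs_mul_one_sub_sq_div_le {β : ℝ} (hβ : 0 < β) (x : ℝ) :
    |x * ((1 - x ^ 2) / ((1 - x ^ 2) ^ 2 + β * x ^ 2))| ≤ 1 / (2 * √β) := by
  have hsqrt : 0 < 2 * √β := by positivity
  have hden : 0 ≤ (1 - x ^ 2) ^ 2 + β * x ^ 2 := by positivity
  rw [mul_div_assoc', abs_div, abs_of_nonneg hden]
  refine div_le_of_le_mul₀ hden (by positivity) ?_
  rw [div_mul_eq_mul_div, one_mul, le_div_iff₀ hsqrt, mul_comm]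
  exact two_mul_sqrt_mul_abs_mul_le hβ.le x (1 - x ^ 2)

lemma norm_toLp_mul_add_mul_sub_le {M u v : ℝ} (hu : |u| ≤ M) (hv : |v| ≤ M) (c : ℝ) :
    ‖!₂[c * (u + v), c * (u - v)]‖ ≤ 2 * |c| * M := by
  have hM : 0 ≤ M := (abs_nonneg u).trans hu
  have hu2 : u ^ 2 ≤ M ^ 2 := sq_le_sq' (abs_le.mp hu).1 (abs_le.mp hu).2
  have hv2 : v ^ 2 ≤ M ^ 2 := sq_le_sq' (abs_le.mp hv).1 (abs_le.mp hv).2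
  refine le_of_sq_le_sq ?_ (by positivity)
  rw [EuclideanSpace.norm_sq_eq, Fin.sum_univ_two]
  simp only [Matrix.cons_val_zero, Matrix.cons_val_one, Real.norm_eq_abs, sq_abs]
  have hc : 0 ≤ c ^ 2 := sq_nonneg c
  calc (c * (u + v)) ^ 2 + (c * (u - v)) ^ 2 = 2 * c ^ 2 * (u ^ 2 + v ^ 2) := by ring
    _ ≤ 2 * c ^ 2 * (M ^ 2 + M ^ 2) := by gcongr
    _ = (2 * |c| * M) ^ 2 := by rw [mul_pow, mul_pow, sq_abs]; ring

theorem stmt_11 (α β : ℝ) (hβ : 0 < β) (f : ℝ → ℝ)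
    (hf : ∀ y, f y = (1 - y) / ((1 - y)^2 + β * y))
    (J : ℝ → ℝ → EuclideanSpace ℝ (Fin 2))
    (hJ : ∀ p q : ℝ, J p q =
      ![α * ((p + q) * f ((p + q)^2) + (p - q) * f ((p - q)^2)),
        α * ((p + q) * f ((p + q)^2) - (p - q) * f ((p - q)^2))]) :
    ∃ C : ℝ, 0 < C ∧ ∀ p q : ℝ, ‖J p q‖ ≤ C := by
  have hbound (x : ℝ) : |x * f (x ^ 2)| ≤ 1 / (2 * √β) := by
    rw [hf]
    exact abs_mul_one_sub_sq_div_le hβ x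
  refine ⟨2 * |α| * (1 / (2 * √β)) + 1, by positivity, fun p q => ?_⟩
  have hJpq : J p q = !₂[α * ((p + q) * f ((p + q)^2) + (p - q) * f ((p - q)^2)),
      α * ((p + q) * f ((p + q)^2) - (p - q) * f ((p - q)^2))] :=
    WithLp.ofLp_injective 2 (hJ p q)
  rw [hJpq]
  linarith [norm_toLp_mul_add_mul_sub_le (hbound (p + q)) (hbound (p - q)) α]
end

section
/- Let α ∈ ℝ, β > 0, f(y) = (1 − y)/((1 − y)² + β·y), and define J : ℝ² → ℝ² by J(p, q) = (j₁, j₂) with j₁ = α·((p+q)·f((p+q)²) + (p−q)·f((p−q)²)) and j₂ = α·((p+q)·f((p+q)²) − (p−q)·f((p−q)²)). Then J is globally Lipschitz: there exists a constant C > 0 such that ‖J(ξ₁) − J(ξ₂)‖ ≤ C·‖ξ₁ − ξ₂‖ for all ξ₁, ξ₂ ∈ ℝ². -/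
/-! Writing `g(x) = x f(x²)`, the map is `J(p, q) = α (g(p + q) + g(p - q), g(p + q) - g(p - q))`.
Both `(p, q) ↦ (p + q, p - q)` and `(a, b) ↦ (a + b, a - b)` scale the Euclidean norm by `√2`, so
`J` is `2|α|K`-Lipschitz as soon as the scalar function `g` is `K`-Lipschitz. For `g` this follows
from the bound `|g'| ≤ 3 (1 + 1/β)` on
`g'(x) = (1 + x²)((1 - x²)² - βx²) / ((1 - x²)² + βx²)²`:
the middle factor is at most the denominator in absolute value, and for `y = x²`
`1 + y ≤ 3((1 - y)² + y) ≤ 3(1 + 1/β)((1 - y)² + βy)`. -/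

noncomputable def slopeCurrent (β x : ℝ) : ℝ :=
  x * (1 - x ^ 2) / ((1 - x ^ 2) ^ 2 + β * x ^ 2)

noncomputable def rotatedCurrent (α : ℝ) (g : ℝ → ℝ) (ξ : EuclideanSpace ℝ (Fin 2)) :
    EuclideanSpace ℝ (Fin 2) :=
  !₂[α * (g (ξ 0 + ξ 1) + g (ξ 0 - ξ 1)), α * (g (ξ 0 + ξ 1) - g (ξ 0 - ξ 1))]

section SlopeCurrent

variable {β : ℝ}

lemma slopeCurrent_denom_pos (hβ : 0 < β) (x : ℝ) : 0 < (1 - x ^ 2) ^ 2 + β * x ^ 2 := by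
  rcases eq_or_ne x 0 with rfl | hx
  · norm_num
  · positivity

lemma hasDerivAt_slopeCurrent (hβ : 0 < β) (x : ℝ) :
    HasDerivAt (slopeCurrent β)
      ((1 + x ^ 2) * ((1 - x ^ 2) ^ 2 - β * x ^ 2) / ((1 - x ^ 2) ^ 2 + β * x ^ 2) ^ 2) x := by
  have hnum : HasDerivAt (fun x : ℝ => x * (1 - x ^ 2)) (1 * (1 - x ^ 2) + x * -(2 * x)) x := by
    simpa using (hasDerivAt_id' x).fun_mul ((hasDerivAt_pow 2 x).const_sub 1)
  have hden : HasDerivAt (fun x : ℝ => (1 - x ^ 2) ^ 2 + β * x ^ 2)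
      (2 * (1 - x ^ 2) * -(2 * x) + β * (2 * x)) x := by
    simpa using (((hasDerivAt_pow 2 x).const_sub 1).fun_pow 2).fun_add
      ((hasDerivAt_pow 2 x).const_mul β)
  refine (hnum.fun_div hden (slopeCurrent_denom_pos hβ x).ne').congr_deriv ?_
  ring

lemma one_add_sq_le_slopeCurrent_denom (hβ : 0 < β) (x : ℝ) :
    1 + x ^ 2 ≤ 3 * (1 + β⁻¹) * ((1 - x ^ 2) ^ 2 + β * x ^ 2) := by
  have hβx : β⁻¹ * (β * x ^ 2) = x ^ 2 := by field_simp
  nlinarith [sq_nonneg (3 * x ^ 2 - 2), sq_nonneg (1 - x ^ 2), sq_nonneg x,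
    mul_nonneg (inv_nonneg.2 hβ.le) (sq_nonneg (1 - x ^ 2))]

lemma abs_deriv_slopeCurrent_le (hβ : 0 < β) (x : ℝ) :
    |deriv (slopeCurrent β) x| ≤ 3 * (1 + β⁻¹) := by
  set D := (1 - x ^ 2) ^ 2 + β * x ^ 2
  have hD : 0 < D := slopeCurrent_denom_pos hβ x
  have hnum : |(1 - x ^ 2) ^ 2 - β * x ^ 2| ≤ D := by
    rw [abs_le]
    constructor <;> nlinarith [sq_nonneg (1 - x ^ 2), mul_nonneg hβ.le (sq_nonneg x)]
  rw [(hasDerivAt_slopeCurrent hβ x).deriv, abs_div, abs_mul,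
    abs_of_pos (by positivity : (0 : ℝ) < 1 + x ^ 2), abs_of_pos (by positivity : 0 < D ^ 2),
    div_le_iff₀ (by positivity)]
  calc (1 + x ^ 2) * |(1 - x ^ 2) ^ 2 - β * x ^ 2|
      ≤ 3 * (1 + β⁻¹) * D * D :=
        mul_le_mul (one_add_sq_le_slopeCurrent_denom hβ x) hnum (abs_nonneg _) (by positivity)
    _ = 3 * (1 + β⁻¹) * D ^ 2 := by ring

lemma lipschitzWith_slopeCurrent (hβ : 0 < β) :
    LipschitzWith (3 * (1 + β⁻¹)).toNNReal (slopeCurrent β) :=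
  lipschitzWith_of_nnnorm_deriv_le (fun x => (hasDerivAt_slopeCurrent hβ x).differentiableAt)
    fun x => by
      rw [Real.le_toNNReal_iff_coe_le (by positivity), coe_nnnorm, Real.norm_eq_abs]
      exact abs_deriv_slopeCurrent_le hβ x

end SlopeCurrent

lemma LipschitzWith.sq_sub_le {g : ℝ → ℝ} {K : NNReal} (hg : LipschitzWith K g) (s t : ℝ) :
    (g s - g t) ^ 2 ≤ K ^ 2 * (s - t) ^ 2 := by
  simpa [Real.dist_eq, sq_abs, mul_pow] using pow_le_pow_left₀ dist_nonneg (hg.dist_le_mul s t) 2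

lemma lipschitzWith_rotatedCurrent {g : ℝ → ℝ} {K : NNReal} (hg : LipschitzWith K g) (α : ℝ) :
    LipschitzWith (2 * ‖α‖₊ * K) (rotatedCurrent α g) := by
  refine LipschitzWith.of_dist_le_mul fun ξ₁ ξ₂ => ?_
  rw [dist_eq_norm, dist_eq_norm, ← sq_le_sq₀ (norm_nonneg _) (by positivity), mul_pow,
    EuclideanSpace.real_norm_sq_eq, EuclideanSpace.real_norm_sq_eq]
  have hu := hg.sq_sub_le (ξ₁ 0 + ξ₁ 1) (ξ₂ 0 + ξ₂ 1)
  have hv := hg.sq_sub_le (ξ₁ 0 - ξ₁ 1) (ξ₂ 0 - ξ₂ 1)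
  simp only [rotatedCurrent, Fin.sum_univ_two, PiLp.sub_apply, Matrix.cons_val_zero,
    Matrix.cons_val_one, NNReal.coe_mul, NNReal.coe_ofNat, coe_nnnorm, Real.norm_eq_abs, mul_pow,
    sq_abs]
  linear_combination 2 * α ^ 2 * (hu + hv)

theorem stmt_12 (α β : ℝ) (hβ : 0 < β) (f : ℝ → ℝ)
    (hf : ∀ y, f y = (1 - y) / ((1 - y)^2 + β * y))
    (J : EuclideanSpace ℝ (Fin 2) → EuclideanSpace ℝ (Fin 2))
    (hJ : ∀ ξ : EuclideanSpace ℝ (Fin 2), J ξ =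
      ![α * ((ξ 0 + ξ 1) * f ((ξ 0 + ξ 1)^2) + (ξ 0 - ξ 1) * f ((ξ 0 - ξ 1)^2)),
        α * ((ξ 0 + ξ 1) * f ((ξ 0 + ξ 1)^2) - (ξ 0 - ξ 1) * f ((ξ 0 - ξ 1)^2))]) :
    ∃ C : ℝ, 0 < C ∧ ∀ ξ₁ ξ₂ : EuclideanSpace ℝ (Fin 2),
      ‖J ξ₁ - J ξ₂‖ ≤ C * ‖ξ₁ - ξ₂‖ := by
  have hJ_eq : J = rotatedCurrent α (slopeCurrent β) := by
    funext ξ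
    ext i
    fin_cases i <;> simp [hJ, hf, rotatedCurrent, slopeCurrent, mul_div_assoc]
  set K := 2 * ‖α‖₊ * (3 * (1 + β⁻¹)).toNNReal
  have hJ_lip : LipschitzWith K J :=
    hJ_eq ▸ lipschitzWith_rotatedCurrent (lipschitzWith_slopeCurrent hβ) α
  refine ⟨K + 1, by positivity, fun ξ₁ ξ₂ => ?_⟩
  rw [← dist_eq_norm, ← dist_eq_norm]
  exact (hJ_lip.dist_le_mul ξ₁ ξ₂).trans (by gcongr; linarith)
end
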